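/- arXiv:1308.4877 — 5 statements merged into one kernel-verified Lean document; each statement's English description precedes it below -/
import Mathlib

section
/- There exists a finite poset P whose cover graph does not contain K_4 as a minor (equivalently, has treewidth at most 2) such that P contains as a subposet the poset obtained from the standard example S_5 by deleting one of its elements. -/
/-- `y` covers `x` in the partial order `P`. -/
def Covers {α : Type*} (P : PartialOrder α) (x y : α) : Prop :=
  P.lt x y ∧ ∀ z, P.lt x z → ¬ P.lt z y

/-- The cover graph of a partial order: `x` is adjacent to `y` iff one covers the other. -/
def coverGraph {α : Type*} (P : PartialOrder α) : SimpleGraph α where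
  Adj x y := Covers P x y ∨ Covers P y x
  symm := ⟨fun _ _ h => h.symm⟩
  loopless := by
    constructor
    intro x h
    letI := P
    rcases h with ⟨h1, _⟩ | ⟨h1, _⟩ <;> exact lt_irrefl x h1

/-- `H` is a minor of `G`: there are pairwise disjoint nonempty branch sets `B x ⊆ V(G)`,
one per vertex `x` of `H`, each inducing a connected subgraph of `G`, such that every edge
`xy` of `H` is witnessed by an edge of `G` between `B x` and `B y`. -/
def HasMinor {V W : Type*} (G : SimpleGraph V) (H : SimpleGraph W) : Prop :=
  ∃ B : W → Set V,
    (∀ x, (B x).Nonempty) ∧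
    (∀ x y, x ≠ y → Disjoint (B x) (B y)) ∧
    (∀ x, (G.induce (B x)).Connected) ∧
    (∀ x y, H.Adj x y → ∃ u ∈ B x, ∃ v ∈ B y, G.Adj u v)

/-- The strict order of the standard example `S_n` on `Fin n ⊕ Fin n`:
`a_i = Sum.inl i`, `b_j = Sum.inr j`, and the only strict relations are `a_i < b_j` for `i ≠ j`. -/
def stdLT (n : ℕ) : (Fin n ⊕ Fin n) → (Fin n ⊕ Fin n) → Prop
  | Sum.inl i, Sum.inr j => i ≠ j
  | _, _ => False

/-- `P` contains the standard example `S_n` as a subposet. -/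
def ContainsStdExample {α : Type*} (P : PartialOrder α) (n : ℕ) : Prop :=
  ∃ f : Fin n ⊕ Fin n → α, Function.Injective f ∧
    ∀ x y, stdLT n x y ↔ P.lt (f x) (f y)

/-!
Realise `S_5` by inclusion via `a_i ↦ {i}`, `b_j ↦ {j}ᶜ` in the subsets of `Fin 5`, delete `b_4`,
and add two hubs `{0, 1, 4}` and `{2, 3, 4}` through which all remaining relations that are not
covers factor. The cover graph becomes a theta graph, in which only the two hubs have degree
at least `3`.

A `K_4` minor, however, needs four vertices of degree at least `3`: a connected branch set `B`
spans at least `|B| - 1` edges, so if all its vertices have degree at most `2`, at most two edges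
leave `B`, whereas each branch set of a `K_4` model must send edges to three others.
-/

open Finset

namespace SimpleGraph

variable {V : Type*} [Fintype V] [DecidableEq V] (G : SimpleGraph V) [DecidableRel G.Adj]

theorem card_interedges_eq_sum_card_inter (s t : Finset V) :
    #(G.interedges s t) = ∑ v ∈ s, #(G.neighborFinset v ∩ t) := by
  rw [interedges_def, card_filter, sum_product]
  refine sum_congr rfl fun v _ ↦ ?_
  rw [← card_filter]
  congr 1
  ext w
  simp [and_comm]

theorem degree_induce_eq_card_inter (s : Finset V) (v : (s : Set V)) :
    (G.induce (s : Set V)).degree v = #(G.neighborFinset v ∩ s) := by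
  rw [← card_neighborFinset_eq_degree, ← card_map (.subtype _)]
  congr 1
  ext w
  simp [and_comm]

theorem sum_degree_eq_two_mul_card_edgeFinset_induce_add_card_interedges (s : Finset V) :
    ∑ v ∈ s, G.degree v = 2 * #(G.induce (s : Set V)).edgeFinset + #(G.interedges s sᶜ) := by
  rw [← sum_degrees_eq_twice_card_edges, card_interedges_eq_sum_card_inter]
  simp_rw [degree_induce_eq_card_inter]
  rw [sum_finset_coe (fun v ↦ #(G.neighborFinset v ∩ s)), ← sum_add_distrib]
  refine sum_congr rfl fun v _ ↦ ?_
  rw [← card_neighborFinset_eq_degree, ← sdiff_eq_inter_compl, card_inter_add_card_sdiff]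

theorem card_interedges_compl_add_two_mul_card_le (s : Finset V)
    (hs : (G.induce (s : Set V)).Connected) :
    #(G.interedges s sᶜ) + 2 * #s ≤ ∑ v ∈ s, G.degree v + 2 := by
  have hedges := hs.card_vert_le_card_edgeSet_add_one
  rw [Nat.card_coe_set_eq, Set.ncard_coe_finset, Nat.card_eq_fintype_card,
    ← edgeFinset_card] at hedges
  rw [sum_degree_eq_two_mul_card_edgeFinset_induce_add_card_interedges]
  omega

theorem exists_three_le_degree_of_two_lt_card_interedges_compl (s : Finset V)
    (hs : (G.induce (s : Set V)).Connected) (hboundary : 2 < #(G.interedges s sᶜ)) :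
    ∃ v ∈ s, 3 ≤ G.degree v := by
  by_contra! hdeg
  have hsum : ∑ v ∈ s, G.degree v ≤ #s * 2 :=
    sum_le_card_nsmul s _ 2 fun v hv ↦ Nat.le_of_lt_succ (hdeg v hv)
  have := G.card_interedges_compl_add_two_mul_card_le s hs
  omega

end SimpleGraph

section Minor

variable {V W : Type*} [Fintype V] [DecidableEq V] {G : SimpleGraph V} [DecidableRel G.Adj]
  {H : SimpleGraph W} [Fintype W] [DecidableRel H.Adj]

theorem degree_le_card_interedges_compl_of_branchSets {B : W → Set V} [∀ x, Fintype (B x)]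
    (hdisj : ∀ x y, x ≠ y → Disjoint (B x) (B y))
    (hadj : ∀ x y, H.Adj x y → ∃ u ∈ B x, ∃ v ∈ B y, G.Adj u v) (x : W) :
    H.degree x ≤ #(G.interedges (B x).toFinset (B x).toFinsetᶜ) := by
  have hedge : ∀ y : H.neighborSet x,
      ∃ e ∈ G.interedges (B x).toFinset (B x).toFinsetᶜ, e.2 ∈ B y := by
    rintro ⟨y, hxy⟩
    obtain ⟨u, hu, v, hv, huv⟩ := hadj x y hxy
    refine ⟨(u, v), ?_, hv⟩
    simpa [SimpleGraph.mk_mem_interedges_iff, hu, huv] using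
      Set.disjoint_right.mp (hdisj x y (H.ne_of_adj hxy)) hv
  choose e he heB using hedge
  have he_inj : Function.Injective fun y ↦ (⟨e y, he y⟩ : G.interedges _ _) := by
    intro y z hyz
    have hyz : e y = e z := congrArg Subtype.val hyz
    by_contra hne
    exact Set.disjoint_left.mp (hdisj y z (Subtype.coe_ne_coe.mpr hne)) (heB y) (hyz ▸ heB z)
  calc H.degree x = Fintype.card (H.neighborSet x) := (H.card_neighborSet_eq_degree x).symm
    _ ≤ Fintype.card (G.interedges _ _) := Fintype.card_le_of_injective _ he_inj
    _ = _ := Fintype.card_coe _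

theorem HasMinor.card_le_card_filter_three_le_degree (h : HasMinor G H)
    (hH : ∀ x, 3 ≤ H.degree x) : Fintype.card W ≤ #{v | 3 ≤ G.degree v} := by
  classical
  obtain ⟨B, -, hdisj, hconn, hadj⟩ := h
  have hbranch : ∀ x, ∃ v ∈ B x, 3 ≤ G.degree v := fun x ↦ by
    simpa using G.exists_three_le_degree_of_two_lt_card_interedges_compl (B x).toFinset
      (by rw [Set.coe_toFinset]; exact hconn x)
      ((hH x).trans (degree_le_card_interedges_compl_of_branchSets hdisj hadj x))
  choose f hfB hf using hbranch
  refine card_le_card_of_injOn f (fun x _ ↦ by simpa using hf x) fun x _ y _ hxy ↦ ?_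
  by_contra hne
  exact Set.disjoint_left.mp (hdisj x y hne) (hfB x) (hxy ▸ hfB y)

end Minor

def stdEmbedding (n : ℕ) : Fin n ⊕ Fin n → Finset (Fin n) :=
  Sum.elim singleton fun j ↦ {j}ᶜ

theorem card_compl_singleton_fin {n : ℕ} (j : Fin n) : #({j}ᶜ : Finset (Fin n)) = n - 1 := by
  simp [card_compl]

theorem stdLT_iff_stdEmbedding_lt {n : ℕ} (hn : 3 ≤ n) (x y : Fin n ⊕ Fin n) :
    stdLT n x y ↔ stdEmbedding n x < stdEmbedding n y := by
  rcases x with i | i <;> rcases y with j | j <;>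
    simp only [stdLT, stdEmbedding, Sum.elim_inl, Sum.elim_inr, false_iff]
  · exact fun h ↦ by simpa using card_lt_card h
  · rw [ssubset_iff_subset_ne, singleton_subset_iff, mem_compl, mem_singleton]
    refine ⟨fun hij ↦ ⟨hij, fun h ↦ ?_⟩, And.left⟩
    have := congrArg card h
    rw [card_singleton, card_compl_singleton_fin] at this
    omega
  · intro h
    have := card_lt_card h
    rw [card_compl_singleton_fin, card_singleton] at this
    omega
  · rw [compl_ssubset_compl]
    exact fun h ↦ by simpa using card_lt_card h

theorem stdEmbedding_injective {n : ℕ} (hn : 3 ≤ n) : Function.Injective (stdEmbedding n) := by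
  have hne (i j : Fin n) : ({i} : Finset (Fin n)) ≠ {j}ᶜ := fun h ↦ by
    have := congrArg card h
    rw [card_singleton, card_compl_singleton_fin] at this
    omega
  rintro (i | i) (j | j) h <;> simp only [stdEmbedding, Sum.elim_inl, Sum.elim_inr] at h
  · rw [singleton_inj.mp h]
  · exact (hne i j h).elim
  · exact (hne j i h.symm).elim
  · rw [singleton_inj.mp (compl_inj_iff.mp h)]

instance Covers.decidableRel {α : Type*} [Fintype α] (P : PartialOrder α) [DecidableRel P.lt] :
    DecidableRel (Covers P) := fun x y ↦
  inferInstanceAs (Decidable (P.lt x y ∧ ∀ z, P.lt x z → ¬ P.lt z y))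

instance coverGraph.decidableRelAdj {α : Type*} [Fintype α] (P : PartialOrder α)
    [DecidableRel P.lt] : DecidableRel (coverGraph P).Adj := fun x y ↦
  inferInstanceAs (Decidable (Covers P x y ∨ Covers P y x))

/-- The cover graph consists of the five paths `{0,1,4} - {4} - {2,3,4}`,
`{0,1,4} - {i} - {1 - i}ᶜ - {2,3,4}` for `i = 0, 1` and `{0,1,4} - {j}ᶜ - {5 - j} - {2,3,4}` for
`j = 2, 3`. -/
def thetaFamily : Finset (Finset (Fin 5)) :=
  {{0}, {1}, {2}, {3}, {4}, {0}ᶜ, {1}ᶜ, {2}ᶜ, {3}ᶜ, {0, 1, 4}, {2, 3, 4}}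

theorem stdEmbedding_mem_thetaFamily :
    ∀ x : Fin 5 ⊕ Fin 5, x ≠ .inr 4 → stdEmbedding 5 x ∈ thetaFamily := by
  decide

theorem card_filter_three_le_degree_coverGraph_thetaFamily :
    #{v | 3 ≤ (coverGraph (Subtype.partialOrder (· ∈ thetaFamily))).degree v} = 2 := by
  decide

/-- There is a finite poset `P` whose cover graph has no `K_4` minor
(equivalently, has treewidth at most 2) such that `P` contains as a subposet the poset
obtained from the standard example `S_5` by deleting one of its elements. -/
theorem exists_poset_no_K4_minor_containing_S5_minus_element :
    ∃ (α : Type) (_ : Fintype α) (P : PartialOrder α),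
      ¬ HasMinor (coverGraph P) (⊤ : SimpleGraph (Fin 4)) ∧
      ∃ (x₀ : Fin 5 ⊕ Fin 5) (f : {x : Fin 5 ⊕ Fin 5 // x ≠ x₀} → α),
        Function.Injective f ∧
        ∀ a b : {x : Fin 5 ⊕ Fin 5 // x ≠ x₀}, stdLT 5 a.1 b.1 ↔ P.lt (f a) (f b) := by
  refine ⟨thetaFamily, inferInstance, Subtype.partialOrder _, fun hK4 ↦ ?_, .inr 4,
    fun x ↦ ⟨stdEmbedding 5 x, stdEmbedding_mem_thetaFamily x x.2⟩, fun x y hxy ↦ ?_,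
    fun x y ↦ stdLT_iff_stdEmbedding_lt (n := 5) (by norm_num) x y⟩
  · have hK4_degree : ∀ x : Fin 4, 3 ≤ (⊤ : SimpleGraph (Fin 4)).degree x := by decide
    have := hK4.card_le_card_filter_three_le_degree hK4_degree
    rw [card_filter_three_le_degree_coverGraph_thetaFamily, Fintype.card_fin] at this
    omega
  · exact Subtype.ext (stdEmbedding_injective (n := 5) (by norm_num) (congrArg Subtype.val hxy))
end

section
/- Let G be a finite graph containing a cycle C, and let P and Q be two vertex-disjoint C-paths, where P has endpoints p_1, p_2 and Q has endpoints q_1, q_2, all four endpoints distinct, and these endpoints appear in the cyclic order p_1, q_1, p_2, q_2 around C. Then G contains K_4 as a minor. -/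
open Set

theorem Fin.injOn_ofNat_Ico (n : ℕ) [NeZero n] (a : ℕ) :
    InjOn (Fin.ofNat n) (Ico a (a + n)) := by
  intro i hi j hj hij
  simp only [mem_Ico] at hi hj
  have hmod : i % n = j % n := by simpa [Fin.ext_iff] using hij
  clear hij
  wlog hle : i ≤ j generalizing i j
  · exact (this hj hi hmod.symm (by omega)).symm
  have := Nat.eq_zero_of_dvd_of_lt ((Nat.modEq_iff_dvd' hle).1 hmod) (by omega)
  omega

theorem Set.disjoint_image_of_inter_range_subset {α β : Type*} {f : α → β} {X : Set β}
    {s t : Set α} {x : α} (hX : X ∩ range f ⊆ {f x}) (hf : InjOn f s) (hx : x ∈ s)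
    (ht : t ⊆ s) (hxt : x ∉ t) : Disjoint X (f '' t) := by
  refine disjoint_left.2 ?_
  rintro _ hv ⟨y, hy, rfl⟩
  exact hxt (hf (ht hy) hx (hX ⟨hv, mem_range_self y⟩) ▸ hy)

namespace SimpleGraph

variable {V : Type*} {G : SimpleGraph V}

def Touches (G : SimpleGraph V) (s t : Set V) : Prop :=
  ∃ u ∈ s, ∃ v ∈ t, G.Adj u v

theorem Touches.symm {s t : Set V} (h : G.Touches s t) : G.Touches t s :=
  let ⟨u, hu, v, hv, huv⟩ := h
  ⟨v, hv, u, hu, huv.symm⟩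

theorem Touches.mono {s s' t t' : Set V} (h : G.Touches s t) (hs : s ⊆ s') (ht : t ⊆ t') :
    G.Touches s' t' :=
  let ⟨u, hu, v, hv, huv⟩ := h
  ⟨u, hs hu, v, ht hv, huv⟩

theorem hasMinor_top_of_forall_lt {W : Type*} [LinearOrder W] {B : W → Set V}
    (hconn : ∀ i, (G.induce (B i)).Connected) (hdisj : ∀ i j, i < j → Disjoint (B i) (B j))
    (htouch : ∀ i j, i < j → G.Touches (B i) (B j)) : HasMinor G (⊤ : SimpleGraph W) := by
  refine ⟨B, fun i => ?_, fun i j hij => ?_, hconn, fun i j hij => ?_⟩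
  · obtain ⟨⟨v, hv⟩⟩ := (hconn i).nonempty
    exact ⟨v, hv⟩
  · rcases hij.lt_or_gt with h | h
    · exact hdisj i j h
    · exact (hdisj j i h).symm
  · rcases (top_adj i j).1 hij |>.lt_or_gt with h | h
    · exact htouch i j h
    · exact (htouch j i h).symm

theorem Walk.IsPath.mem_support_dropLast_iff {u v w : V} {p : G.Walk u v} (hp : p.IsPath)
    (huv : u ≠ v) : w ∈ p.dropLast.support ↔ w ∈ p.support ∧ w ≠ v := by
  have hsupp := support_dropLast_concat (not_nil_of_ne huv (p := p))
  have hnodup := hp.support_nodup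
  rw [← hsupp] at hnodup ⊢
  constructor
  · intro hw
    exact ⟨List.mem_append_left _ hw, fun hwv =>
      List.disjoint_of_nodup_append hnodup hw (hwv ▸ List.mem_singleton_self _)⟩
  · rintro ⟨hw, hwv⟩
    simpa [hwv] using hw

theorem Walk.IsPath.dropLast_support_inter_subset {u v : V} {p : G.Walk u v} (hp : p.IsPath)
    (huv : u ≠ v) {s : Set V} (hs : {w | w ∈ p.support} ∩ s = {u, v}) :
    {w | w ∈ p.dropLast.support} ∩ s ⊆ {u} := by
  rintro w ⟨hw, hws⟩
  replace hw := (hp.mem_support_dropLast_iff huv).1 hw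
  have hwuv : w ∈ ({u, v} : Set V) := hs ▸ ⟨hw.1, hws⟩
  simpa [hw.2] using hwuv

section Chain

variable {f : ℕ → V} {a b : ℕ}

theorem connected_induce_image_Ico (hf : ∀ i, G.Adj (f i) (f (i + 1))) (hab : a < b) :
    (G.induce (f '' Ico a b)).Connected := by
  induction b, hab using Nat.le_induction with
  | base =>
    rw [Nat.succ_eq_add_one, Ico_add_one_right_eq_Icc, Icc_self, image_singleton]
    exact ⟨.of_subsingleton⟩
  | succ b hab ih =>
    rw [Ico_add_one_right_eq_Icc, ← Ico_insert_right (by omega), image_insert_eq, insert_eq,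
      union_comm]
    exact connected_induce_union ih.preconnected .of_subsingleton
      (mem_image_of_mem f (show b - 1 ∈ Ico a b from ⟨by omega, by omega⟩)) rfl
      (Nat.sub_add_cancel (by omega : 1 ≤ b) ▸ hf (b - 1))

theorem touches_image_Ico (hf : ∀ i, G.Adj (f i) (f (i + 1))) (hab : a < b) {t : Set V}
    (hb : f b ∈ t) : G.Touches (f '' Ico a b) t :=
  ⟨f (b - 1), mem_image_of_mem f ⟨by omega, by omega⟩, f b, hb,
    Nat.sub_add_cancel (by omega : 1 ≤ b) ▸ hf (b - 1)⟩

theorem disjoint_image_Ico_of_injOn {e i j k l : ℕ} (hf : InjOn f (Ico a e)) (hai : a ≤ i)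
    (hij : i ≤ j) (hjk : j ≤ k) (hkl : k ≤ l) (hle : l ≤ e) :
    Disjoint (f '' Ico i j) (f '' Ico k l) :=
  Disjoint.image (Ico_disjoint_Ico.2 (by omega)) hf (Ico_subset_Ico hai (by omega))
    (Ico_subset_Ico (by omega) hle)

theorem hasMinor_top_fin_four_of_crossing_chords (hf : ∀ i, G.Adj (f i) (f (i + 1)))
    {c d e : ℕ} (hab : a < b) (hbc : b < c) (hcd : c < d) (hde : d < e)
    (hinj : InjOn f (Ico a e)) (hper : f e = f a) {X Y : Set V}
    (hX : (G.induce X).Connected) (haX : f a ∈ X) (hXf : X ∩ range f ⊆ {f a})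
    (hXc : G.Touches X {f c})
    (hY : (G.induce Y).Connected) (hbY : f b ∈ Y) (hYf : Y ∩ range f ⊆ {f b})
    (hYd : G.Touches Y {f d}) (hXY : Disjoint X Y) :
    HasMinor G (⊤ : SimpleGraph (Fin 4)) := by
  have arc {i j k l : ℕ} (h : a ≤ i ∧ i ≤ j ∧ j ≤ k ∧ k ≤ l ∧ l ≤ e) :
      Disjoint (f '' Ico i j) (f '' Ico k l) :=
    disjoint_image_Ico_of_injOn hinj h.1 h.2.1 h.2.2.1 h.2.2.2.1 h.2.2.2.2
  have hXarc {i j : ℕ} (h : a < i ∧ j ≤ e) : Disjoint X (f '' Ico i j) :=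
    disjoint_image_of_inter_range_subset hXf hinj ⟨le_rfl, by omega⟩
      (Ico_subset_Ico h.1.le h.2) fun ha => by simp only [mem_Ico] at ha; omega
  have hYarc {i j : ℕ} (h : a ≤ i ∧ j ≤ e ∧ (b < i ∨ j ≤ b)) :
      Disjoint Y (f '' Ico i j) :=
    disjoint_image_of_inter_range_subset hYf hinj ⟨hab.le, by omega⟩
      (Ico_subset_Ico h.1 h.2.1) fun hb => by simp only [mem_Ico] at hb; omega
  have mem {i j k : ℕ} (hi : i ≤ k) (hj : k < j) : f k ∈ f '' Ico i j :=
    mem_image_of_mem f ⟨hi, hj⟩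
  refine hasMinor_top_of_forall_lt (B := ![f '' Ico a b ∪ X, f '' Ico b c ∪ Y, f '' Ico c d,
    f '' Ico d e]) (fun i => ?_) (fun i j hij => ?_) (fun i j hij => ?_)
  · fin_cases i
    · exact induce_union_connected (connected_induce_image_Ico hf hab).preconnected
        hX.preconnected ⟨f a, mem le_rfl hab, haX⟩
    · exact induce_union_connected (connected_induce_image_Ico hf hbc).preconnected
        hY.preconnected ⟨f b, mem le_rfl hbc, hbY⟩
    · exact connected_induce_image_Ico hf hcd
    · exact connected_induce_image_Ico hf hde
  · fin_cases i <;> fin_cases j <;> try exact absurd hij (by decide)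
    · exact disjoint_union_left.2
        ⟨disjoint_union_right.2 ⟨arc (by omega), (hYarc (by omega)).symm⟩,
          disjoint_union_right.2 ⟨hXarc (by omega), hXY⟩⟩
    · exact disjoint_union_left.2 ⟨arc (by omega), hXarc (by omega)⟩
    · exact disjoint_union_left.2 ⟨arc (by omega), hXarc (by omega)⟩
    · exact disjoint_union_left.2 ⟨arc (by omega), hYarc (by omega)⟩
    · exact disjoint_union_left.2 ⟨arc (by omega), hYarc (by omega)⟩
    · exact arc (by omega)
  · fin_cases i <;> fin_cases j <;> try exact absurd hij (by decide)
    · exact (touches_image_Ico hf hab (mem_union_left _ (mem le_rfl hbc))).mono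
        subset_union_left subset_rfl
    · exact hXc.mono subset_union_right (singleton_subset_iff.2 (mem le_rfl hcd))
    · exact (touches_image_Ico hf hde (hper ▸ mem_union_left _ (mem le_rfl hab))).symm
    · exact (touches_image_Ico hf hbc (mem le_rfl hcd)).mono subset_union_left subset_rfl
    · exact hYd.mono subset_union_right (singleton_subset_iff.2 (mem le_rfl hde))
    · exact touches_image_Ico hf hcd (mem le_rfl hde)

end Chain

end SimpleGraph

theorem hasK4Minor_of_crossing_paths_general {V : Type*} (G : SimpleGraph V)
    (n : ℕ) (c : Fin n → V) (hinj : Function.Injective c)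
    (hcyc : ∀ r s : Fin n, ((r : ℕ) + 1) % n = (s : ℕ) → G.Adj (c r) (c s))
    (p₁ p₂ q₁ q₂ : V) (P : G.Walk p₁ p₂) (Q : G.Walk q₁ q₂)
    (hP : P.IsPath) (hQ : Q.IsPath)
    -- `P` and `Q` are `C`-paths: they meet the cycle exactly in their endpoints
    (hPC : {v | v ∈ P.support} ∩ Set.range c = {p₁, p₂})
    (hQC : {v | v ∈ Q.support} ∩ Set.range c = {q₁, q₂})
    -- `P` and `Q` are vertex-disjoint
    (hdisj : ∀ v, v ∈ P.support → v ∉ Q.support)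
    -- the endpoints appear in the cyclic order `p₁, q₁, p₂, q₂` around the cycle
    (t₁ t₂ t₃ t₄ : Fin n)
    (h₁₂ : (t₁ : ℕ) < t₂) (h₂₃ : (t₂ : ℕ) < t₃) (h₃₄ : (t₃ : ℕ) < t₄)
    (hc₁ : c t₁ = p₁) (hc₂ : c t₂ = q₁) (hc₃ : c t₃ = p₂) (hc₄ : c t₄ = q₂) :
    HasMinor G (⊤ : SimpleGraph (Fin 4)) := by
  have : NeZero n := ⟨t₁.pos.ne'⟩
  -- Unrolling the cycle periodically makes the arc from `q₂` back to `p₁` the interval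
  -- `[t₄, t₁ + n)` of indices.
  set f : ℕ → V := fun i => c (Fin.ofNat n i)
  have hft (t : Fin n) : f t = c t := congrArg c (Fin.ofNat_val_eq_self t)
  have hp : p₁ ≠ p₂ := hc₁ ▸ hc₃ ▸ hinj.ne (Fin.ne_of_lt (h₁₂.trans h₂₃))
  have hq : q₁ ≠ q₂ := hc₂ ▸ hc₄ ▸ hinj.ne (Fin.ne_of_lt (h₂₃.trans h₃₄))
  have hPf : {v | v ∈ P.dropLast.support} ∩ range f ⊆ {f t₁} := by
    rw [hft, hc₁]
    exact (inter_subset_inter_right _ (range_comp_subset_range _ c)).trans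
      (hP.dropLast_support_inter_subset hp hPC)
  have hQf : {v | v ∈ Q.dropLast.support} ∩ range f ⊆ {f t₂} := by
    rw [hft, hc₂]
    exact (inter_subset_inter_right _ (range_comp_subset_range _ c)).trans
      (hQ.dropLast_support_inter_subset hq hQC)
  refine SimpleGraph.hasMinor_top_fin_four_of_crossing_chords (f := f) (e := t₁ + n)
    (fun i => hcyc _ _ (by simp [Nat.add_mod])) h₁₂ h₂₃ h₃₄ (by omega)
    (hinj.comp_injOn (Fin.injOn_ofNat_Ico n t₁))
    (congrArg c (Fin.ext (by simp [Nat.mod_eq_of_lt t₁.isLt])))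
    P.dropLast.connected_induce_support (by simp [hft, hc₁]) hPf
    ⟨_, P.dropLast.end_mem_support, _, rfl, by
      simpa [hft, hc₃] using P.adj_penultimate (SimpleGraph.Walk.not_nil_of_ne hp)⟩
    Q.dropLast.connected_induce_support (by simp [hft, hc₂]) hQf
    ⟨_, Q.dropLast.end_mem_support, _, rfl, by
      simpa [hft, hc₄] using Q.adj_penultimate (SimpleGraph.Walk.not_nil_of_ne hq)⟩
    (disjoint_left.2 fun v hvP hvQ => hdisj v ((hP.mem_support_dropLast_iff hp).1 hvP).1
      ((hQ.mem_support_dropLast_iff hq).1 hvQ).1)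

/-- Let `G` be a finite graph containing a cycle `C` (given by the
injective cyclic enumeration `c`), and let `P` and `Q` be two vertex-disjoint `C`-paths,
with endpoints `p₁, p₂` and `q₁, q₂` respectively, all four distinct, appearing in the
cyclic order `p₁, q₁, p₂, q₂` around `C`. Then `G` contains `K_4` as a minor. -/
theorem hasK4Minor_of_crossing_paths {V : Type*} [Fintype V] (G : SimpleGraph V)
    (n : ℕ) (hn : 3 ≤ n) (c : Fin n → V) (hinj : Function.Injective c)
    (hcyc : ∀ r s : Fin n, ((r : ℕ) + 1) % n = (s : ℕ) → G.Adj (c r) (c s))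
    (p₁ p₂ q₁ q₂ : V) (P : G.Walk p₁ p₂) (Q : G.Walk q₁ q₂)
    (hP : P.IsPath) (hQ : Q.IsPath)
    -- `P` and `Q` are `C`-paths: they meet the cycle exactly in their endpoints
    (hPC : {v | v ∈ P.support} ∩ Set.range c = {p₁, p₂})
    (hQC : {v | v ∈ Q.support} ∩ Set.range c = {q₁, q₂})
    -- `P` and `Q` are vertex-disjoint
    (hdisj : ∀ v, v ∈ P.support → v ∉ Q.support)
    -- the endpoints appear in the cyclic order `p₁, q₁, p₂, q₂` around the cycle
    (t₁ t₂ t₃ t₄ : Fin n)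
    (h₁₂ : (t₁ : ℕ) < t₂) (h₂₃ : (t₂ : ℕ) < t₃) (h₃₄ : (t₃ : ℕ) < t₄)
    (hc₁ : c t₁ = p₁) (hc₂ : c t₂ = q₁) (hc₃ : c t₃ = p₂) (hc₄ : c t₄ = q₂) :
    HasMinor G (⊤ : SimpleGraph (Fin 4)) :=
  hasK4Minor_of_crossing_paths_general G n c hinj hcyc p₁ p₂ q₁ q₂ P Q hP hQ hPC hQC hdisj t₁ t₂ t₃
    t₄ h₁₂ h₂₃ h₃₄ hc₁ hc₂ hc₃ hc₄
end

section
/- Let G be a finite graph containing a cycle C and a vertex x not on C, and suppose there are three paths in G from x to C that pairwise intersect only in x, each of which meets C only in its endpoint on C, and whose endpoints on C are three distinct vertices. Then G contains K_4 as a minor. -/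
open Function

namespace SimpleGraph

variable {V : Type*} {G : SimpleGraph V}

structure IsCliqueModel {n : ℕ} (G : SimpleGraph V) (B : Fin n → Set V) : Prop where
  connected : ∀ i, (G.induce (B i)).Connected
  pairwise_disjoint : Pairwise (Disjoint on B)
  pairwise_adj : Pairwise fun i j => ∃ u ∈ B i, ∃ v ∈ B j, G.Adj u v

namespace IsCliqueModel

variable {n : ℕ} {B : Fin n → Set V}

theorem hasMinor (hB : G.IsCliqueModel B) : HasMinor G (⊤ : SimpleGraph (Fin n)) :=
  ⟨B, fun i => Set.nonempty_coe_sort.mp (hB.connected i).nonempty,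
    fun _ _ hij => hB.pairwise_disjoint hij, hB.connected, fun _ _ hij => hB.pairwise_adj hij⟩

theorem cons (hB : G.IsCliqueModel B) {S : Set V} (hS : (G.induce S).Connected)
    (hSB : ∀ i, Disjoint S (B i)) (hSadj : ∀ i, ∃ u ∈ S, ∃ v ∈ B i, G.Adj u v) :
    G.IsCliqueModel (Fin.cons S B : Fin (n + 1) → Set V) where
  connected := Fin.cases hS hB.connected
  pairwise_disjoint := pairwise_fin_succ_iff.mpr
    ⟨fun i => (hSB i).symm, hSB, fun _ _ hij => hB.pairwise_disjoint hij⟩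
  pairwise_adj := pairwise_fin_succ_iff.mpr
    ⟨fun i => by
      obtain ⟨u, hu, v, hv, huv⟩ := hSadj i
      exact ⟨v, hv, u, hu, huv.symm⟩, hSadj, fun _ _ hij => hB.pairwise_adj hij⟩

end IsCliqueModel

theorem isCliqueModel_three {S₀ S₁ S₂ : Set V} (h₀ : (G.induce S₀).Connected)
    (h₁ : (G.induce S₁).Connected) (h₂ : (G.induce S₂).Connected)
    (d₀₁ : Disjoint S₀ S₁) (d₀₂ : Disjoint S₀ S₂) (d₁₂ : Disjoint S₁ S₂)
    (a₀₁ : ∃ u ∈ S₀, ∃ v ∈ S₁, G.Adj u v) (a₀₂ : ∃ u ∈ S₀, ∃ v ∈ S₂, G.Adj u v)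
    (a₁₂ : ∃ u ∈ S₁, ∃ v ∈ S₂, G.Adj u v) :
    G.IsCliqueModel ![S₀, S₁, S₂] := by
  have single : G.IsCliqueModel ![S₂] :=
    ⟨Fin.forall_fin_one.mpr h₂, Subsingleton.pairwise, Subsingleton.pairwise⟩
  exact (single.cons h₁ (Fin.forall_fin_one.mpr d₁₂) (Fin.forall_fin_one.mpr a₁₂)).cons h₀
    (Fin.forall_fin_two.mpr ⟨d₀₁, d₀₂⟩) (Fin.forall_fin_two.mpr ⟨a₀₁, a₀₂⟩)

namespace Walk

variable {a b c u v : V}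

theorem IsPath.end_notMem_dropLast_support {p : G.Walk u v} (hp : p.IsPath) :
    v ∉ p.support.dropLast := by
  have hnd := hp.support_nodup
  rw [← dropLast_support_concat] at hnd
  exact fun hv => List.disjoint_of_nodup_append hnd hv (List.mem_singleton_self v)

theorem IsCycle.exists_isCliqueModel_three_of_append_eq {C : G.Walk a a} (hC : C.IsCycle)
    (A₁ : G.Walk a b) (A₂ : G.Walk b c) (A₃ : G.Walk c a) (hA : A₁.append (A₂.append A₃) = C)
    (hab : a ≠ b) (hbc : b ≠ c) (hca : c ≠ a) :
    ∃ T : Fin 3 → Set V, G.IsCliqueModel T ∧ (∀ i, T i ⊆ {z | z ∈ C.support}) ∧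
      ∀ i, ∃ v ∈ ({a, b, c} : Set V), v ∈ T i := by
  have n₁ : ¬A₁.Nil := not_nil_of_ne hab
  have n₂ : ¬A₂.Nil := not_nil_of_ne hbc
  have n₃ : ¬A₃.Nil := not_nil_of_ne hca
  have hnd : (A₁.tail.support ++ (A₂.tail.support ++ A₃.tail.support)).Nodup := by
    simpa only [support_tail_of_not_nil _ n₁, support_tail_of_not_nil _ n₂,
      support_tail_of_not_nil _ n₃, ← tail_support_append, hA] using hC.support_nodup
  have d₁₂₃ := List.disjoint_of_nodup_append hnd
  have d₂₃ := List.disjoint_of_nodup_append (List.nodup_append'.mp hnd).2.1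
  refine ⟨![{z | z ∈ A₁.tail.support}, {z | z ∈ A₂.tail.support}, {z | z ∈ A₃.tail.support}],
    isCliqueModel_three A₁.tail.connected_induce_support A₂.tail.connected_induce_support
      A₃.tail.connected_induce_support ?_ ?_ ?_ ?_ ?_ ?_, ?_, ?_⟩
  · exact Set.disjoint_left.mpr fun z h₁ h₂ => d₁₂₃ h₁ (List.mem_append_left _ h₂)
  · exact Set.disjoint_left.mpr fun z h₁ h₃ => d₁₂₃ h₁ (List.mem_append_right _ h₃)
  · exact Set.disjoint_left.mpr fun z h₂ h₃ => d₂₃ h₂ h₃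
  · exact ⟨b, A₁.tail.end_mem_support, _, A₂.tail.start_mem_support, A₂.adj_snd n₂⟩
  · exact ⟨_, A₁.tail.start_mem_support, a, A₃.tail.end_mem_support, (A₁.adj_snd n₁).symm⟩
  · exact ⟨c, A₂.tail.end_mem_support, _, A₃.tail.start_mem_support, A₃.adj_snd n₃⟩
  · subst hA
    intro i z hz
    fin_cases i <;> simp_all [List.mem_of_mem_tail]
  · intro i
    fin_cases i
    exacts [⟨b, by simp, A₁.tail.end_mem_support⟩, ⟨c, by simp, A₂.tail.end_mem_support⟩,
      ⟨a, by simp, A₃.tail.end_mem_support⟩]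

theorem IsCycle.exists_isCliqueModel_three {C : G.Walk u u} (hC : C.IsCycle)
    (ha : a ∈ C.support) (hb : b ∈ C.support) (hc : c ∈ C.support)
    (hab : a ≠ b) (hbc : b ≠ c) (hca : c ≠ a) :
    ∃ T : Fin 3 → Set V, G.IsCliqueModel T ∧ (∀ i, T i ⊆ {z | z ∈ C.support}) ∧
      ∀ i, ∃ v ∈ ({a, b, c} : Set V), v ∈ T i := by
  classical
  set C' := C.rotate a ha
  suffices ∃ T : Fin 3 → Set V, G.IsCliqueModel T ∧ (∀ i, T i ⊆ {z | z ∈ C'.support}) ∧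
      ∀ i, ∃ v ∈ ({a, b, c} : Set V), v ∈ T i by
    obtain ⟨T, hT, hTC', habc⟩ := this
    exact ⟨T, hT, fun i z hz => (mem_support_rotate_iff C a ha).mp (hTC' i hz), habc⟩
  have hC' : C'.IsCycle := hC.rotate ha
  have hb' : b ∈ C'.support := (mem_support_rotate_iff C a ha).mpr hb
  have hc' : c ∈ C'.support := (mem_support_rotate_iff C a ha).mpr hc
  rw [← C'.take_spec hb', mem_support_append_iff] at hc'
  rcases hc' with hc' | hc'
  · -- the cyclic order is `a, c, b`
    have hA : ((C'.takeUntil b hb').takeUntil c hc').append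
        (((C'.takeUntil b hb').dropUntil c hc').append (C'.dropUntil b hb')) = C' := by
      rw [append_assoc, take_spec, take_spec]
    rw [Set.pair_comm]
    exact hC'.exists_isCliqueModel_three_of_append_eq _ _ _ hA hca.symm hbc.symm hab.symm
  · have hA : (C'.takeUntil b hb').append
        (((C'.dropUntil b hb').takeUntil c hc').append ((C'.dropUntil b hb').dropUntil c hc'))
        = C' := by
      rw [take_spec, take_spec]
    exact hC'.exists_isCliqueModel_three_of_append_eq _ _ _ hA hab hbc hca

end Walk

open Walk

theorem connected_induce_iUnion_support {ι : Type*} [Nonempty ι] {x : V} {v : ι → V}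
    (p : ∀ i, G.Walk x (v i)) : (G.induce (⋃ i, {z | z ∈ (p i).support})).Connected := by
  refine G.induce_connected_of_patches x
    (Set.mem_iUnion.mpr ⟨Classical.arbitrary ι, (p _).start_mem_support⟩) fun hz => ?_
  obtain ⟨i, hi⟩ := Set.mem_iUnion.mp hz
  exact ⟨_, Set.subset_iUnion _ i, (p i).start_mem_support, hi,
    (p i).connected_induce_support.preconnected _ _⟩

theorem exists_connected_adj_of_isPath {ι : Type*} [Nonempty ι] {x : V} {v : ι → V}
    (P : ∀ i, G.Walk x (v i)) (hP : ∀ i, (P i).IsPath) (hx : ∀ i, x ≠ v i) :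
    ∃ S : Set V, (G.induce S).Connected ∧ (∀ z ∈ S, ∃ i, z ∈ (P i).support ∧ z ≠ v i) ∧
      ∀ i, ∃ u ∈ S, G.Adj u (v i) := by
  have hnil (i) : ¬(P i).Nil := not_nil_of_ne (hx i)
  have hmem (i z) : z ∈ {z | z ∈ (P i).dropLast.support} ↔ z ∈ (P i).support.dropLast := by
    rw [Set.mem_ofPred_eq, support_dropLast (hnil i)]
  refine ⟨⋃ i, {z | z ∈ (P i).dropLast.support}, connected_induce_iUnion_support _,
    fun z hz => ?_, fun i => ?_⟩
  · obtain ⟨i, hi⟩ := Set.mem_iUnion.mp hz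
    rw [hmem] at hi
    exact ⟨i, List.mem_of_mem_dropLast hi, fun h => (hP i).end_notMem_dropLast_support (h ▸ hi)⟩
  · refine ⟨_, Set.mem_iUnion.mpr ⟨i, ?_⟩, adj_penultimate (hnil i)⟩
    exact (hmem i _).mpr (penultimate_mem_dropLast_support (hnil i))

end SimpleGraph

open SimpleGraph

theorem hasK4Minor_of_three_fan_paths_general {V : Type*} (G : SimpleGraph V)
    (v₀ : V) (C : G.Walk v₀ v₀) (hC : C.IsCycle)
    (x : V) (hx : x ∉ C.support)
    (e : Fin 3 → V) (he : Function.Injective e) (heC : ∀ i, e i ∈ C.support)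
    (P : (i : Fin 3) → G.Walk x (e i))
    (hP : ∀ i, (P i).IsPath)
    -- each path meets `C` only in its endpoint on `C`
    (hPC : ∀ i, ∀ w ∈ (P i).support, w ∈ C.support → w = e i) :
    HasMinor G (⊤ : SimpleGraph (Fin 4)) := by
  obtain ⟨T, hT, hTC, hTe⟩ := hC.exists_isCliqueModel_three (heC 0) (heC 1) (heC 2)
    (he.ne (by decide)) (he.ne (by decide)) (he.ne (by decide))
  obtain ⟨S, hS, hSP, hSe⟩ := exists_connected_adj_of_isPath P hP fun i h => hx (h ▸ heC i)
  have hST (i) : Disjoint S (T i) := Set.disjoint_left.mpr fun z hzS hzT => by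
    obtain ⟨j, hzj, hze⟩ := hSP z hzS
    exact hze (hPC j z hzj (hTC i hzT))
  have hST_adj (i) : ∃ u ∈ S, ∃ v ∈ T i, G.Adj u v := by
    obtain ⟨j, hj⟩ : ∃ j, e j ∈ T i := by
      obtain ⟨v, hv, hvT⟩ := hTe i
      rcases hv with rfl | rfl | rfl
      exacts [⟨0, hvT⟩, ⟨1, hvT⟩, ⟨2, hvT⟩]
    obtain ⟨u, hu, hue⟩ := hSe j
    exact ⟨u, hu, e j, hj, hue⟩
  exact (hT.cons hS hST hST_adj).hasMinor

/-- Let `G` be a finite graph containing a cycle `C` and a vertex `x`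
not on `C`, with three paths from `x` to `C` that pairwise meet only in `x`, each meeting
`C` only in its endpoint on `C`, these three endpoints being distinct. Then `G` contains
`K_4` as a minor. -/
theorem hasK4Minor_of_three_fan_paths {V : Type*} [Fintype V] (G : SimpleGraph V)
    (v₀ : V) (C : G.Walk v₀ v₀) (hC : C.IsCycle)
    (x : V) (hx : x ∉ C.support)
    (e : Fin 3 → V) (he : Function.Injective e) (heC : ∀ i, e i ∈ C.support)
    (P : (i : Fin 3) → G.Walk x (e i))
    (hP : ∀ i, (P i).IsPath)
    -- each path meets `C` only in its endpoint on `C`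
    (hPC : ∀ i, ∀ w ∈ (P i).support, w ∈ C.support → w = e i)
    -- the paths pairwise intersect only in `x`
    (hPP : ∀ i j, i ≠ j → ∀ w, w ∈ (P i).support → w ∈ (P j).support → w = x) :
    HasMinor G (⊤ : SimpleGraph (Fin 4)) :=
  hasK4Minor_of_three_fan_paths_general G v₀ C hC x hx e he heC P hP hPC
end

section
/- Let C be a longest cycle in a finite graph G and let P be a C-path with endpoints u and v. Then each of the two arcs of C between u and v contains at least as many internal vertices as P does. -/
/-!
Glue `P` to either arc `Q` of `C` between `u` and `v`: since `P` meets `C` only in `u` and `v`,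
the result is a cycle, so `|P| + |Q| ≤ |C|` because `C` is longest. The complementary arc has
`|C| - |Q| - 1` internal vertices, which is therefore at least `|P| - 1`.
-/

namespace SimpleGraph

variable {V : Type*} {G : SimpleGraph V}

lemma exists_walk_support_eq_map_range' (f : ℕ → V) (hf : ∀ i, G.Adj (f i) (f (i + 1)))
    (a : ℕ) : ∀ k : ℕ, ∃ w : G.Walk (f a) (f (a + k)),
      w.length = k ∧ w.support = (List.range' a (k + 1)).map f
  | 0 => ⟨.nil, rfl, by simp⟩
  | k + 1 => by
    obtain ⟨w, hlen, hsupp⟩ := exists_walk_support_eq_map_range' f hf a k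
    refine ⟨w.concat (hf (a + k)), by simp [hlen], ?_⟩
    rw [Walk.support_concat, hsupp, List.range'_concat (n := k + 1)]
    simp

lemma exists_isPath_of_injOn (f : ℕ → V) (hf : ∀ i, G.Adj (f i) (f (i + 1))) (a k : ℕ)
    (hinj : Set.InjOn f (Set.Icc a (a + k))) :
    ∃ w : G.Walk (f a) (f (a + k)), w.IsPath ∧ w.length = k ∧ ∀ x ∈ w.support, x ∈ Set.range f := by
  obtain ⟨w, hlen, hsupp⟩ := exists_walk_support_eq_map_range' f hf a k
  refine ⟨w, .mk' ?_, hlen, fun x hx => ?_⟩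
  · rw [hsupp]
    refine (List.nodup_range').map_on fun i hi j hj hij => hinj ?_ ?_ hij <;>
      · simp only [List.mem_range', Set.mem_Icc] at hi hj ⊢
        omega
  · rw [hsupp, List.mem_map] at hx
    obtain ⟨i, -, rfl⟩ := hx
    exact Set.mem_range_self i

lemma exists_isPath_arc {n : ℕ} {c : Fin n → V} (hinj : Function.Injective c)
    (hcyc : ∀ r s : Fin n, ((r : ℕ) + 1) % n = s → G.Adj (c r) (c s))
    (a b : Fin n) (k : ℕ) (hk : k < n) (hab : (a + k) % n = b) :
    ∃ w : G.Walk (c a) (c b), w.IsPath ∧ w.length = k ∧ ∀ x ∈ w.support, x ∈ Set.range c := by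
  have hn : 0 < n := a.pos
  let f : ℕ → V := fun i => c ⟨i % n, Nat.mod_lt i hn⟩
  have hf : ∀ i, G.Adj (f i) (f (i + 1)) := fun i => hcyc _ _ (by simp [Nat.add_mod])
  have hinjOn : Set.InjOn f (Set.Icc a (a + k)) := fun i hi j hj hij => by
    have hmod : i ≡ j [MOD n] := Fin.mk.inj_iff.mp (hinj hij)
    refine hmod.eq_of_abs_lt (abs_sub_lt_iff.mpr ⟨?_, ?_⟩) <;>
      · simp only [Set.mem_Icc] at hi hj
        omega
  obtain ⟨w, hw, hlen, hsupp⟩ := exists_isPath_of_injOn f hf a k hinjOn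
  have hfa : f a = c a := congrArg c (Fin.ext (Nat.mod_eq_of_lt a.isLt))
  have hfb : f (a + k) = c b := congrArg c (Fin.ext hab)
  refine ⟨w.copy hfa hfb, (Walk.isPath_copy _ _ _).mpr hw, by simp [hlen], fun x hx => ?_⟩
  obtain ⟨i, rfl⟩ := hsupp x (by simpa using hx)
  exact Set.mem_range_self _

lemma Walk.IsPath.start_notMem_support_tail {u v : V} {p : G.Walk u v} (hp : p.IsPath) :
    u ∉ p.support.tail := by
  have hnodup := hp.support_nodup
  rw [← p.cons_tail_support, List.nodup_cons] at hnodup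
  exact hnodup.1

lemma Walk.IsPath.isCycle_append_of_inter_support {u v : V} {p : G.Walk u v} {q : G.Walk v u}
    (hp : p.IsPath) (hq : q.IsPath) (hlen : 1 < p.length)
    (hpq : ∀ x ∈ p.support, x ∈ q.support → x = u ∨ x = v) : (p.append q).IsCycle := by
  refine hp.isCycle_append hq (fun x hxp hxq => ?_) (.inl hlen)
  rcases hpq x (List.mem_of_mem_tail hxp) (List.mem_of_mem_tail hxq) with rfl | rfl
  · exact hp.start_notMem_support_tail hxp
  · exact hq.start_notMem_support_tail hxq

end SimpleGraph

open SimpleGraph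

theorem arcs_of_longest_cycle_long_general {V : Type*} (G : SimpleGraph V)
    (n : ℕ) (c : Fin n → V) (hinj : Function.Injective c)
    (hcyc : ∀ r s : Fin n, ((r : ℕ) + 1) % n = (s : ℕ) → G.Adj (c r) (c s))
    -- `C` is a longest cycle of `G`
    (hlongest : ∀ (a : V) (w : G.Walk a a), w.IsCycle → w.length ≤ n)
    (u v : V) (P : G.Walk u v) (hP : P.IsPath)
    -- `P` is a `C`-path: it meets the cycle exactly in its two endpoints
    (hPC : {w | w ∈ P.support} ∩ Set.range c = {u, v})
    (s t : Fin n) (hst : (s : ℕ) < t) (hcs : c s = u) (hct : c t = v) :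
    P.length - 1 ≤ ((t : ℕ) - (s : ℕ)) - 1 ∧
    P.length - 1 ≤ (n - ((t : ℕ) - (s : ℕ))) - 1 := by
  obtain hshort | hlen := Nat.lt_or_ge P.length 2
  · omega
  subst hcs hct
  have key : ∀ Q : G.Walk (c t) (c s), Q.IsPath → (∀ x ∈ Q.support, x ∈ Set.range c) →
      P.length + Q.length ≤ n := fun Q hQ hQc => by
    refine Walk.length_append P Q ▸ hlongest _ _ (hP.isCycle_append_of_inter_support hQ hlen ?_)
    intro x hxP hxQ
    have hx : x ∈ {w | w ∈ P.support} ∩ Set.range c := ⟨hxP, hQc x hxQ⟩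
    simpa [hPC] using hx
  have htn := t.isLt
  obtain ⟨Q₁, hQ₁, hlen₁, hQ₁c⟩ := exists_isPath_arc hinj hcyc s t (t - s) (by omega)
    (by rw [Nat.add_sub_cancel' hst.le, Nat.mod_eq_of_lt htn])
  obtain ⟨Q₂, hQ₂, hlen₂, hQ₂c⟩ := exists_isPath_arc hinj hcyc t s (n - (t - s)) (by omega)
    (by rw [show (t : ℕ) + (n - (t - s)) = s + n by omega, Nat.add_mod_right,
      Nat.mod_eq_of_lt s.isLt])
  have h₁ := key Q₁.reverse hQ₁.reverse (by simpa using hQ₁c)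
  have h₂ := key Q₂ hQ₂ hQ₂c
  rw [Walk.length_reverse] at h₁
  omega

/-- Let `C` be a longest cycle in a finite graph `G` (given by the
injective cyclic enumeration `c`, with every cycle of `G` having length at most `n`),
and let `P` be a `C`-path with endpoints `u = c s` and `v = c t` where `s < t`. Then each
of the two arcs of `C` between `u` and `v` (having `(t - s) - 1` and `(n - (t - s)) - 1`
internal vertices respectively) has at least as many internal vertices as `P` has
(namely `P.length - 1`). -/
theorem arcs_of_longest_cycle_long {V : Type*} [Fintype V] (G : SimpleGraph V)
    (n : ℕ) (hn : 3 ≤ n) (c : Fin n → V) (hinj : Function.Injective c)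
    (hcyc : ∀ r s : Fin n, ((r : ℕ) + 1) % n = (s : ℕ) → G.Adj (c r) (c s))
    -- `C` is a longest cycle of `G`
    (hlongest : ∀ (a : V) (w : G.Walk a a), w.IsCycle → w.length ≤ n)
    (u v : V) (P : G.Walk u v) (hP : P.IsPath) (hne : 0 < P.length)
    -- `P` is a `C`-path: it meets the cycle exactly in its two endpoints
    (hPC : {w | w ∈ P.support} ∩ Set.range c = {u, v})
    (s t : Fin n) (hst : (s : ℕ) < t) (hcs : c s = u) (hct : c t = v) :
    P.length - 1 ≤ ((t : ℕ) - (s : ℕ)) - 1 ∧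
    P.length - 1 ≤ (n - ((t : ℕ) - (s : ℕ))) - 1 :=
  arcs_of_longest_cycle_long_general G n c hinj hcyc hlongest u v P hP hPC s t hst hcs hct
end

section
/- Let G be a finite 2-connected graph with pathwidth at most 2 and let C be a longest cycle of G. Then every C-path in G has at most one internal vertex, and if a C-path has an internal vertex, that vertex has degree 2 in G. -/
/-- The pathwidth of `G` is at most `w`: there is a path-decomposition, given by bags
indexed along a path `Fin n`, covering all vertices and edges, such that the set of bags
containing any fixed vertex is consecutive, with every bag of size at most `w + 1`. -/
def PathwidthLE {V : Type*} (G : SimpleGraph V) (w : ℕ) : Prop :=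
  ∃ (n : ℕ) (B : Fin n → Set V),
    (∀ v, ∃ i, v ∈ B i) ∧
    (∀ u v, G.Adj u v → ∃ i, u ∈ B i ∧ v ∈ B i) ∧
    (∀ v (i j k : Fin n), i ≤ j → j ≤ k → v ∈ B i → v ∈ B k → v ∈ B j) ∧
    (∀ i, (B i).ncard ≤ w + 1)

/-- `G` is 2-connected: it is connected, has at least 3 vertices, and remains connected
after deleting any single vertex. -/
def TwoConnected {V : Type*} (G : SimpleGraph V) : Prop :=
  G.Connected ∧ 3 ≤ Nat.card V ∧ ∀ v : V, (G.induce {u | u ≠ v}).Connected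

/-!
A path-decomposition of width `w` admits no `K_{w+2}`-model: the bags meeting a connected branch
set form an interval, pairwise touching intervals share a bag (Helly), and that bag would contain
`w + 2` vertices. In width `2` it admits no θ-model either (two poles joined by three disjoint
connected branches, each containing an edge): comparing the intervals of the poles with those of
the branches again overfills a bag.

Let `P` be a `C`-path from `u` to `v`. Closing `P` up with either arc of the longest cycle `C`
gives a cycle, so both arcs are at least as long as `P`. If `P` had two interior vertices, the
interiors of `P` and of the two arcs would form a θ-model with poles `u` and `v`. If `P = u x v`
and `x` had a third neighbour `y`, a path from `y` avoiding `x` (2-connectivity) first meets `C`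
at some `z`. For `z ∈ {u, v}` this gives a `C`-path with two interior vertices; otherwise `{x}`,
that path, and the two pieces into which `C - z` falls when cut just before `u` form a
`K₄`-model.
-/

open Function Set

section Order

variable {α : Type*}

theorem pairwise_on_vec₃ {r : α → α → Prop} (hr : ∀ a b, r a b → r b a) {a b c : α}
    (hab : r a b) (hac : r a c) (hbc : r b c) : Pairwise (r on ![a, b, c]) := by
  have : Std.Symm r := ⟨hr⟩
  simp [pairwise_fin_succ_iff_of_isSymm, Fin.forall_fin_succ, onFun, *]

theorem pairwise_on_vec₄ {r : α → α → Prop} (hr : ∀ a b, r a b → r b a) {a b c d : α}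
    (hab : r a b) (hac : r a c) (had : r a d) (hbc : r b c) (hbd : r b d) (hcd : r c d) :
    Pairwise (r on ![a, b, c, d]) := by
  have : Std.Symm r := ⟨hr⟩
  simp [pairwise_fin_succ_iff_of_isSymm, Fin.forall_fin_succ, onFun, *]

variable [LinearOrder α]

theorem nonempty_iInter_of_ordConnected {ι : Type*} [Finite ι] [Nontrivial ι] [WellFoundedLT α]
    {S : ι → Set α} (hS : ∀ k, (S k).OrdConnected)
    (h : Pairwise fun k l => (S k ∩ S l).Nonempty) : (⋂ k, S k).Nonempty := by
  have hne : ∀ k, (S k).Nonempty := fun k =>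
    let ⟨_, hl⟩ := exists_ne k
    (h hl.symm).mono inter_subset_left
  -- The largest of the left endpoints lies in every interval.
  let lo k := wellFounded_lt.min (S k) (hne k)
  obtain ⟨k₀, hk₀⟩ := Finite.exists_max lo
  refine ⟨lo k₀, mem_iInter.2 fun l => ?_⟩
  rcases eq_or_ne l k₀ with rfl | hl
  · exact wellFounded_lt.min_mem _ _
  obtain ⟨p, hpl, hpk⟩ := h hl
  exact (hS l).out (wellFounded_lt.min_mem _ _) hpl
    ⟨hk₀ l, not_lt.1 (wellFounded_lt.not_lt_min _ hpk)⟩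

theorem Set.OrdConnected.left_mem_or_right_mem {S : Set α} (hS : S.OrdConnected) {a b : α}
    (hmeet : (S ∩ Icc a b).Nonempty) (hsub : ¬S ⊆ Icc a b) : a ∈ S ∨ b ∈ S := by
  obtain ⟨t, htS, hat, htb⟩ := hmeet
  obtain ⟨r, hrS, hr⟩ := not_subset.1 hsub
  rcases lt_or_ge r a with hra | har
  · exact Or.inl (hS.out hrS htS ⟨hra.le, hat⟩)
  · exact Or.inr (hS.out htS hrS ⟨htb, (lt_of_not_ge fun hrb => hr ⟨har, hrb⟩).le⟩)

theorem Set.OrdConnected.forall_lt_of_isGreatest_lt {S T : Set α} (hT : T.OrdConnected)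
    (hST : Disjoint S T) {p q : α} (hp : IsGreatest S p) (hq : IsGreatest T q) (hpq : p < q) :
    ∀ b ∈ T, p < b := fun b hb => by
  by_contra! hbp
  exact hST.ne_of_mem hp.1 (hT.out hb hq.1 ⟨hbp, hpq.le⟩) rfl

theorem exists_isGreatest_lt_or_of_disjoint [Finite α] {S T : Set α} (hS : S.OrdConnected)
    (hT : T.OrdConnected) (hSne : S.Nonempty) (hTne : T.Nonempty) (hST : Disjoint S T) :
    (∃ p, IsGreatest S p ∧ ∀ b ∈ T, p < b) ∨ ∃ q, IsGreatest T q ∧ ∀ a ∈ S, q < a := by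
  obtain ⟨p, hpS, hp⟩ := exists_max_image S id (toFinite S) hSne
  obtain ⟨q, hqT, hq⟩ := exists_max_image T id (toFinite T) hTne
  have hp' : IsGreatest S p := ⟨hpS, hp⟩
  have hq' : IsGreatest T q := ⟨hqT, hq⟩
  rcases lt_or_gt_of_ne (hST.ne_of_mem hpS hqT) with hpq | hqp
  · exact Or.inl ⟨p, hp', hT.forall_lt_of_isGreatest_lt hST hp' hq' hpq⟩
  · exact Or.inr ⟨q, hq', hS.forall_lt_of_isGreatest_lt hST.symm hq' hp' hqp⟩

end Order

namespace SimpleGraph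

variable {V : Type*} {G : SimpleGraph V}

namespace Walk

theorem IsPath.isCycle_append_of_support {u v : V} {p : G.Walk u v} {q : G.Walk v u}
    (hp : p.IsPath) (hq : q.IsPath) (hn : 1 < p.length ∨ 1 < q.length)
    (h : ∀ z ∈ p.support, z ∈ q.support → z = u ∨ z = v) : (p.append q).IsCycle := by
  refine hp.isCycle_append hq (fun z hzp hzq => ?_) hn
  have hp' := hp.support_nodup
  have hq' := hq.support_nodup
  rw [← cons_tail_support] at hp' hq'
  rcases h z (List.mem_of_mem_tail hzp) (List.mem_of_mem_tail hzq) with rfl | rfl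
  · exact (List.nodup_cons.1 hp').1 hzp
  · exact (List.nodup_cons.1 hq').1 hzq

theorem exists_eq_cons_concat {u v : V} (P : G.Walk u v) (h : 2 ≤ P.length) :
    ∃ (s y : V) (hs : G.Adj u s) (hy : G.Adj y v) (Q : G.Walk s y),
      P = cons hs (Q.concat hy) := by
  cases P with
  | nil => simp at h
  | cons hs P =>
    have hP : ¬P.Nil := not_nil_iff_lt_length.2 (by simp at h; omega)
    exact ⟨_, _, hs, adj_penultimate hP, P.dropLast, by rw [concat_dropLast]⟩

theorem adj_of_mem_support_of_length_le_two {u v w : V} {P : G.Walk u v} (hP : P.length ≤ 2)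
    (hw : w ∈ P.support) (hwu : w ≠ u) (hwv : w ≠ v) : G.Adj u w ∧ G.Adj w v := by
  cases P with
  | nil => simp_all
  | cons h P =>
    cases P with
    | nil => simp_all
    | cons h' P =>
      cases P with
      | nil => simp_all
      | cons => simp at hP

theorem exists_prefix_first_mem {S : Set V} : ∀ {y t : V} (W : G.Walk y t), t ∈ S →
    ∃ z ∈ S, ∃ R : G.Walk y z, (∀ w ∈ R.support, w ∈ S → w = z) ∧ R.support ⊆ W.support
  | _, _, .nil, ht => ⟨_, ht, .nil, by simp, by simp⟩
  | y, _, .cons h W, ht => by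
    by_cases hy : y ∈ S
    · exact ⟨y, hy, .nil, by simp, by simp⟩
    obtain ⟨z, hz, R, hRS, hRW⟩ := exists_prefix_first_mem W ht
    refine ⟨z, hz, .cons h R, ?_, by simpa using List.subset_cons_of_subset _ hRW⟩
    simp only [support_cons, List.mem_cons, forall_eq_or_imp]
    exact ⟨fun h => absurd h hy, hRS⟩

end Walk

theorem Preconnected.exists_walk_of_induce {s : Set V} (h : (G.induce s).Preconnected)
    {y z : V} (hy : y ∈ s) (hz : z ∈ s) : ∃ W : G.Walk y z, ∀ w ∈ W.support, w ∈ s := by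
  obtain ⟨W⟩ := h ⟨y, hy⟩ ⟨z, hz⟩
  refine ⟨W.map (Embedding.induce s).toHom, fun w hw => ?_⟩
  obtain ⟨w', -, rfl⟩ := List.mem_map.1 (W.support_map (Embedding.induce s).toHom ▸ hw)
  exact w'.2

structure PathDecomposition (G : SimpleGraph V) (w : ℕ) where
  len : ℕ
  bag : Fin len → Set V
  exists_mem_bag : ∀ v, ∃ i, v ∈ bag i
  exists_mem_bag_of_adj : ∀ u v, G.Adj u v → ∃ i, u ∈ bag i ∧ v ∈ bag i
  mem_bag_of_le_of_le : ∀ v (i j k : Fin len), i ≤ j → j ≤ k → v ∈ bag i → v ∈ bag k → v ∈ bag j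
  ncard_bag_le : ∀ i, (bag i).ncard ≤ w + 1

namespace PathDecomposition

section

variable {w : ℕ} (D : G.PathDecomposition w)

def bagsMeeting (M : Set V) : Set (Fin D.len) := {i | (M ∩ D.bag i).Nonempty}

@[simp]
theorem mem_bagsMeeting_singleton {v : V} {i : Fin D.len} :
    i ∈ D.bagsMeeting {v} ↔ v ∈ D.bag i := by
  simp [bagsMeeting]

theorem bagsMeeting_singleton_nonempty (v : V) : (D.bagsMeeting {v}).Nonempty :=
  let ⟨i, hi⟩ := D.exists_mem_bag v
  ⟨i, D.mem_bagsMeeting_singleton.2 hi⟩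

theorem inter_bagsMeeting_nonempty_of_adj {A B : Set V} {a b : V} (ha : a ∈ A) (hb : b ∈ B)
    (hab : G.Adj a b) : (D.bagsMeeting A ∩ D.bagsMeeting B).Nonempty :=
  let ⟨i, hai, hbi⟩ := D.exists_mem_bag_of_adj a b hab
  ⟨i, ⟨a, ha, hai⟩, ⟨b, hb, hbi⟩⟩

theorem exists_mem_support_mem_bag {z₁ z₃ : V} (W : G.Walk z₁ z₃) {j₁ j₂ j₃ : Fin D.len}
    (h₁ : z₁ ∈ D.bag j₁) (h₃ : z₃ ∈ D.bag j₃) (h₁₂ : j₁ ≤ j₂) (h₂₃ : j₂ ≤ j₃) :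
    ∃ z ∈ W.support, z ∈ D.bag j₂ := by
  induction W generalizing j₁ with
  | nil => exact ⟨_, Walk.start_mem_support _, D.mem_bag_of_le_of_le _ _ _ _ h₁₂ h₂₃ h₁ h₃⟩
  | cons hab W ih =>
    obtain ⟨k, hak, hbk⟩ := D.exists_mem_bag_of_adj _ _ hab
    rcases le_or_gt j₂ k with hk | hk
    · exact ⟨_, Walk.start_mem_support _, D.mem_bag_of_le_of_le _ _ _ _ h₁₂ hk h₁ hak⟩
    · obtain ⟨z, hz, hzb⟩ := ih hbk h₃ hk.le
      exact ⟨z, List.mem_cons_of_mem _ hz, hzb⟩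

theorem ordConnected_bagsMeeting_support {s t : V} (W : G.Walk s t) :
    (D.bagsMeeting {z | z ∈ W.support}).OrdConnected := by
  classical
  refine ⟨fun j₁ ⟨z₁, hz₁, hb₁⟩ j₃ ⟨z₃, hz₃, hb₃⟩ j₂ ⟨h₁₂, h₂₃⟩ => ?_⟩
  obtain ⟨z, hz, hzb⟩ := D.exists_mem_support_mem_bag
    ((W.takeUntil z₁ hz₁).reverse.append (W.takeUntil z₃ hz₃)) hb₁ hb₃ h₁₂ h₂₃
  refine ⟨z, ?_, hzb⟩
  rw [Walk.mem_support_append_iff, Walk.support_reverse, List.mem_reverse] at hz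
  exact hz.elim (fun h => W.support_takeUntil_subset_support _ h)
    (fun h => W.support_takeUntil_subset_support _ h)

theorem ordConnected_bagsMeeting_singleton (v : V) : (D.bagsMeeting {v}).OrdConnected := by
  simpa using D.ordConnected_bagsMeeting_support (Walk.nil : G.Walk v v)

theorem length_le_of_nodup [Finite V] {l : List V} (hl : l.Nodup) {t : Fin D.len}
    (h : ∀ x ∈ l, x ∈ D.bag t) : l.length ≤ w + 1 := by
  classical
  calc l.length = (l.toFinset : Set V).ncard := by
        rw [ncard_coe_finset, List.toFinset_card_of_nodup hl]
    _ ≤ (D.bag t).ncard := ncard_le_ncard (fun x hx => h x (by simpa using hx)) (toFinite _)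
    _ ≤ w + 1 := D.ncard_bag_le t

theorem false_of_cliqueModel [Finite V] (M : Fin (w + 2) → Set V)
    (hconv : ∀ k, (D.bagsMeeting (M k)).OrdConnected) (hdisj : Pairwise (Disjoint on M))
    (hadj : Pairwise fun k l => ∃ p ∈ M k, ∃ q ∈ M l, G.Adj p q) : False := by
  obtain ⟨t, ht⟩ := nonempty_iInter_of_ordConnected hconv fun k l hkl =>
    let ⟨_, hp, _, hq, hpq⟩ := hadj hkl
    D.inter_bagsMeeting_nonempty_of_adj hp hq hpq
  choose z hzM hzt using mem_iInter.1 ht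
  have hz : Injective z := fun k l h =>
    by_contra fun hkl => (hdisj hkl).ne_of_mem (hzM k) (hzM l) h
  simpa using D.length_le_of_nodup (List.nodup_ofFn.2 hz) (t := t) fun x hx => by
    obtain ⟨k, rfl⟩ := List.mem_ofFn.1 hx
    exact hzt k

theorem inter_bagsMeeting_inter_nonempty {u v : V} {M : Set V}
    (hM : (D.bagsMeeting M).OrdConnected)
    (huv : (D.bagsMeeting {u} ∩ D.bagsMeeting {v}).Nonempty)
    (hu : ∃ x ∈ M, G.Adj u x) (hv : ∃ y ∈ M, G.Adj v y) :
    (D.bagsMeeting M ∩ (D.bagsMeeting {u} ∩ D.bagsMeeting {v})).Nonempty := by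
  obtain ⟨x, hx, hux⟩ := hu
  obtain ⟨y, hy, hvy⟩ := hv
  obtain ⟨t, ht⟩ := nonempty_iInter_of_ordConnected
    (S := ![D.bagsMeeting {u}, D.bagsMeeting {v}, D.bagsMeeting M])
    (fun k => by
      fin_cases k
      exacts [D.ordConnected_bagsMeeting_singleton u, D.ordConnected_bagsMeeting_singleton v, hM])
    (pairwise_on_vec₃ (r := fun S T : Set (Fin D.len) => (S ∩ T).Nonempty)
      (fun _ _ h => by rwa [inter_comm]) huv
      (D.inter_bagsMeeting_nonempty_of_adj (mem_singleton u) hx hux)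
      (D.inter_bagsMeeting_nonempty_of_adj (mem_singleton v) hy hvy))
  simp only [mem_iInter, Fin.forall_fin_succ] at ht
  exact ⟨t, ht.2.2.1, ht.1, ht.2.1⟩

end

variable [Finite V] (D : G.PathDecomposition 2) {u v : V}

theorem false_of_thetaModel_of_inter_nonempty (huv : u ≠ v) (M : Fin 3 → Set V)
    (hconv : ∀ k, (D.bagsMeeting (M k)).OrdConnected) (hdisj : Pairwise (Disjoint on M))
    (hu : ∀ k, u ∉ M k) (hv : ∀ k, v ∉ M k)
    (hadju : ∀ k, ∃ x ∈ M k, G.Adj u x) (hadjv : ∀ k, ∃ y ∈ M k, G.Adj v y)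
    (hedge : ∀ k, ∃ p ∈ M k, ∃ q ∈ M k, G.Adj p q)
    (hJ : (D.bagsMeeting {u} ∩ D.bagsMeeting {v}).Nonempty) : False := by
  classical
  set J := D.bagsMeeting {u} ∩ D.bagsMeeting {v}
  have hfull : ∀ t ∈ J, ∀ k l, ∀ p ∈ M k, ∀ q ∈ M l, p ≠ q → p ∈ D.bag t → q ∈ D.bag t →
      False := by
    rintro t ⟨htu, htv⟩ k l p hp q hq hpq hpt hqt
    have hup : u ≠ p := fun h => hu k (h ▸ hp)
    have hvp : v ≠ p := fun h => hv k (h ▸ hp)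
    have huq : u ≠ q := fun h => hu l (h ▸ hq)
    have hvq : v ≠ q := fun h => hv l (h ▸ hq)
    have := D.length_le_of_nodup (l := [u, v, p, q]) (t := t)
      (by simp [huv, hup, hvp, huq, hvq, hpq]) (by simp_all)
    simp at this
  obtain ⟨lo, hlo, hlo'⟩ := exists_min_image J id (toFinite J) hJ
  obtain ⟨hi, hhi, hhi'⟩ := exists_max_image J id (toFinite J) hJ
  have hJconv : J.OrdConnected :=
    (D.ordConnected_bagsMeeting_singleton u).inter (D.ordConnected_bagsMeeting_singleton v)
  -- A branch has an edge, which `hfull` keeps out of the bags of `J`; so it passes through an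
  -- end of `J`.
  have hend : ∀ k, lo ∈ D.bagsMeeting (M k) ∨ hi ∈ D.bagsMeeting (M k) := by
    intro k
    refine (hconv k).left_mem_or_right_mem ?_ fun hsub => ?_
    · obtain ⟨t, htM, htJ⟩ :=
        D.inter_bagsMeeting_inter_nonempty (hconv k) hJ (hadju k) (hadjv k)
      exact ⟨t, htM, hlo' t htJ, hhi' t htJ⟩
    · obtain ⟨p, hp, q, hq, hpq⟩ := hedge k
      obtain ⟨r, hpr, hqr⟩ := D.exists_mem_bag_of_adj p q hpq
      exact hfull r (hJconv.out hlo hhi (hsub ⟨p, hp, hpr⟩)) k k p hp q hq hpq.ne hpr hqr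
  -- Two of the three branches pass through the same end of `J`.
  obtain ⟨k, l, hkl, hkl'⟩ :=
    Fintype.exists_ne_map_eq_of_card_lt (fun k => decide (lo ∈ D.bagsMeeting (M k))) (by simp)
  obtain ⟨t, htJ, ⟨p, hp, hpt⟩, ⟨q, hq, hqt⟩⟩ :
      ∃ t ∈ J, t ∈ D.bagsMeeting (M k) ∧ t ∈ D.bagsMeeting (M l) := by
    by_cases hk : lo ∈ D.bagsMeeting (M k)
    · exact ⟨lo, hlo, hk, by simpa [hk] using hkl'⟩
    · exact ⟨hi, hhi, (hend k).resolve_left hk, (hend l).resolve_left (by simpa [hk] using hkl')⟩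
  exact hfull t htJ k l p hp q hq ((hdisj hkl).ne_of_mem hp hq) hpt hqt

theorem false_of_thetaModel_of_isGreatest_lt (M : Fin 3 → Set V)
    (hconv : ∀ k, (D.bagsMeeting (M k)).OrdConnected) (hdisj : Pairwise (Disjoint on M))
    (hu : ∀ k, u ∉ M k) (hadju : ∀ k, ∃ x ∈ M k, G.Adj u x)
    (hadjv : ∀ k, ∃ y ∈ M k, G.Adj v y) {q : Fin D.len}
    (hq : IsGreatest (D.bagsMeeting {u}) q) (hqv : ∀ b ∈ D.bagsMeeting {v}, q < b) : False := by
  have hqM : ∀ k, q ∈ D.bagsMeeting (M k) := fun k => by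
    obtain ⟨x, hx, hux⟩ := hadju k
    obtain ⟨y, hy, hvy⟩ := hadjv k
    obtain ⟨a, hau, haM⟩ := D.inter_bagsMeeting_nonempty_of_adj (mem_singleton u) hx hux
    obtain ⟨b, hbv, hbM⟩ := D.inter_bagsMeeting_nonempty_of_adj (mem_singleton v) hy hvy
    exact (hconv k).out haM hbM ⟨hq.2 hau, (hqv b hbv).le⟩
  choose z hzM hzq using hqM
  have hzu : ∀ k, u ≠ z k := fun k h => hu k (h ▸ hzM k)
  have hzz : ∀ k l, k ≠ l → z k ≠ z l := fun k l hkl => (hdisj hkl).ne_of_mem (hzM k) (hzM l)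
  have := D.length_le_of_nodup (l := [u, z 0, z 1, z 2]) (t := q)
    (by simp [hzu, hzz 0 1 (by decide), hzz 0 2 (by decide), hzz 1 2 (by decide)])
    (by simpa [hzq] using hq.1)
  simp at this

theorem false_of_thetaModel (huv : u ≠ v) (M : Fin 3 → Set V)
    (hconv : ∀ k, (D.bagsMeeting (M k)).OrdConnected) (hdisj : Pairwise (Disjoint on M))
    (hu : ∀ k, u ∉ M k) (hv : ∀ k, v ∉ M k)
    (hadju : ∀ k, ∃ x ∈ M k, G.Adj u x) (hadjv : ∀ k, ∃ y ∈ M k, G.Adj v y)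
    (hedge : ∀ k, ∃ p ∈ M k, ∃ q ∈ M k, G.Adj p q) : False := by
  by_cases hJ : (D.bagsMeeting {u} ∩ D.bagsMeeting {v}).Nonempty
  · exact D.false_of_thetaModel_of_inter_nonempty huv M hconv hdisj hu hv hadju hadjv hedge hJ
  rcases exists_isGreatest_lt_or_of_disjoint (D.ordConnected_bagsMeeting_singleton u)
      (D.ordConnected_bagsMeeting_singleton v) (D.bagsMeeting_singleton_nonempty u)
      (D.bagsMeeting_singleton_nonempty v) (disjoint_iff_inter_eq_empty.2
        (not_nonempty_iff_eq_empty.1 hJ)) with ⟨q, hq, hqv⟩ | ⟨q, hq, hqu⟩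
  · exact D.false_of_thetaModel_of_isGreatest_lt M hconv hdisj hu hadju hadjv hq hqv
  · exact D.false_of_thetaModel_of_isGreatest_lt M hconv hdisj hv hadjv hadju hq hqu

end PathDecomposition

section SeqWalk

variable {f : ℕ → V} (hf : ∀ k, G.Adj (f k) (f (k + 1)))

def seqWalk (i : ℕ) : (ℓ : ℕ) → G.Walk (f i) (f (i + ℓ))
  | 0 => .nil
  | ℓ + 1 => (seqWalk i ℓ).concat (hf (i + ℓ))

@[simp]
theorem length_seqWalk (i ℓ : ℕ) : (seqWalk hf i ℓ).length = ℓ := by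
  induction ℓ with
  | zero => rfl
  | succ ℓ ih => simp [seqWalk, ih]

theorem mem_support_seqWalk {i ℓ : ℕ} {z : V} :
    z ∈ (seqWalk hf i ℓ).support ↔ z ∈ f '' Icc i (i + ℓ) := by
  induction ℓ with
  | zero => simp [seqWalk]
  | succ ℓ ih =>
    simp only [seqWalk, Walk.support_concat, List.mem_append, ih, List.mem_singleton]
    constructor
    · rintro (⟨t, ⟨ht, ht'⟩, rfl⟩ | rfl)
      · exact ⟨t, ⟨ht, by omega⟩, rfl⟩
      · exact ⟨i + (ℓ + 1), ⟨by omega, le_rfl⟩, rfl⟩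
    · rintro ⟨t, ⟨ht, ht'⟩, rfl⟩
      rcases eq_or_lt_of_le ht' with rfl | ht'
      · exact Or.inr rfl
      · exact Or.inl ⟨t, ⟨ht, by omega⟩, rfl⟩

end SeqWalk

theorem PathDecomposition.ordConnected_bagsMeeting_image_Icc {w : ℕ}
    (D : G.PathDecomposition w) {f : ℕ → V} (hf : ∀ k, G.Adj (f k) (f (k + 1))) (a b : ℕ) :
    (D.bagsMeeting (f '' Icc a b)).OrdConnected := by
  rcases le_or_gt a b with hab | hab
  · obtain ⟨ℓ, rfl⟩ := Nat.exists_eq_add_of_le hab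
    convert D.ordConnected_bagsMeeting_support (seqWalk hf a ℓ) using 2
    ext z
    exact (mem_support_seqWalk hf).symm
  · simp [Icc_eq_empty (not_le.2 hab), PathDecomposition.bagsMeeting, ordConnected_empty]

/-- `f` runs periodically around a cycle of length `n` of `G`; indexing by `ℕ` rather than by
`Fin n` makes the arcs of the cycle images of intervals `Icc a b`. -/
structure IsCycleEnum (G : SimpleGraph V) (n : ℕ) (f : ℕ → V) : Prop where
  adj : ∀ k, G.Adj (f k) (f (k + 1))
  eq_iff_modEq : ∀ j k, f j = f k ↔ j ≡ k [MOD n]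

theorem exists_isCycleEnum {n : ℕ} [NeZero n] {c : Fin n → V} (hinj : Injective c)
    (hcyc : ∀ r s : Fin n, ((r : ℕ) + 1) % n = s → G.Adj (c r) (c s)) :
    ∃ f, G.IsCycleEnum n f ∧ range f = range c :=
  ⟨c ∘ Fin.ofNat n,
    ⟨fun k => hcyc _ _ (by simp), fun j k => hinj.eq_iff.trans Fin.ext_iff⟩,
    Surjective.range_comp (f := Fin.ofNat n) (fun r => ⟨r, Fin.ofNat_val_eq_self r⟩) c⟩

namespace IsCycleEnum

variable {n : ℕ} {f : ℕ → V}

theorem apply_add_self (hC : G.IsCycleEnum n f) (k : ℕ) : f (k + n) = f k :=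
  (hC.eq_iff_modEq _ _).2 Nat.add_modEq_right

theorem apply_add_add_sub (hC : G.IsCycleEnum n f) (i : ℕ) {a : ℕ} (ha : a ≤ n) :
    f (i + a + (n - a)) = f i := by
  rw [show i + a + (n - a) = i + n by omega, hC.apply_add_self]

theorem adj_sub_one (hC : G.IsCycleEnum n f) {k : ℕ} (hk : 0 < k) :
    G.Adj (f (k - 1)) (f k) := by
  simpa [Nat.sub_add_cancel hk] using hC.adj (k - 1)

theorem adj_add_sub_one (hC : G.IsCycleEnum n f) (hn : 0 < n) (i : ℕ) :
    G.Adj (f (i + n - 1)) (f i) := by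
  simpa [hC.apply_add_self] using hC.adj_sub_one (k := i + n) (by omega)

theorem exists_lt_apply_eq (hC : G.IsCycleEnum n f) (hn : 0 < n) {z : V} (hz : z ∈ range f) :
    ∃ k < n, f k = z := by
  obtain ⟨k, rfl⟩ := hz
  exact ⟨k % n, Nat.mod_lt _ hn, (hC.eq_iff_modEq _ _).2 (Nat.mod_modEq k n)⟩

theorem exists_offset (hC : G.IsCycleEnum n f) {i : ℕ} (hi : i < n) {z : V}
    (hz : z ∈ range f) : ∃ d < n, f (i + d) = z := by
  obtain ⟨k, hk, rfl⟩ := hC.exists_lt_apply_eq (by omega) hz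
  rcases le_or_gt i k with h | h
  · exact ⟨k - i, by omega, by rw [Nat.add_sub_cancel' h]⟩
  · exact ⟨k + n - i, by omega, by rw [show i + (k + n - i) = k + n by omega, hC.apply_add_self]⟩

theorem disjoint_image_Icc (hC : G.IsCycleEnum n f) {a b a' b' : ℕ} (h : b < a')
    (h' : b' < a + n) : Disjoint (f '' Icc a b) (f '' Icc a' b') := by
  rw [Set.disjoint_left]
  rintro _ ⟨j, ⟨hj, hj'⟩, rfl⟩ ⟨k, ⟨hk, hk'⟩, hjk⟩
  have hdvd := (Nat.modEq_iff_dvd' (by omega)).1 ((hC.eq_iff_modEq j k).1 hjk.symm)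
  exact absurd (Nat.le_of_dvd (by omega) hdvd) (by omega)

theorem apply_notMem_image_Icc_of_lt (hC : G.IsCycleEnum n f) {a b k : ℕ} (h : b < k)
    (h' : k < a + n) : f k ∉ f '' Icc a b := fun hk =>
  Set.disjoint_left.1 (hC.disjoint_image_Icc h h') hk (mem_image_of_mem f (left_mem_Icc.2 le_rfl))

theorem apply_notMem_image_Icc_of_gt (hC : G.IsCycleEnum n f) {a b k : ℕ} (h : k < a)
    (h' : b < k + n) : f k ∉ f '' Icc a b := fun hk =>
  Set.disjoint_left.1 (hC.disjoint_image_Icc h h') (mem_image_of_mem f (left_mem_Icc.2 le_rfl)) hk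

theorem apply_add_ne (hC : G.IsCycleEnum n f) (i : ℕ) {d : ℕ} (hd : 0 < d) (hdn : d < n) :
    f (i + d) ≠ f i := fun h =>
  hC.apply_notMem_image_Icc_of_lt (a := i) (b := i) (by omega) (by omega)
    ⟨i, left_mem_Icc.2 le_rfl, h.symm⟩

theorem isPath_seqWalk (hC : G.IsCycleEnum n f) (i : ℕ) {ℓ : ℕ} (hℓ : ℓ < n) :
    (seqWalk hC.adj i ℓ).IsPath := by
  induction ℓ with
  | zero => exact .nil
  | succ ℓ ih =>
    exact (ih (by omega)).concat (fun h => hC.apply_notMem_image_Icc_of_lt (by omega) (by omega)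
      ((mem_support_seqWalk hC.adj).1 h)) _

theorem add_length_le (hC : G.IsCycleEnum n f)
    (hlongest : ∀ (a : V) (w : G.Walk a a), w.IsCycle → w.length ≤ n) {i ℓ : ℕ} (hℓ : ℓ < n)
    (P : G.Walk (f (i + ℓ)) (f i)) (hP : P.IsPath) (hP2 : 2 ≤ P.length)
    (hPC : ∀ z ∈ P.support, z ∈ range f → z = f (i + ℓ) ∨ z = f i) : ℓ + P.length ≤ n := by
  have hcyc := (hC.isPath_seqWalk i hℓ).isCycle_append_of_support hP (Or.inr hP2)
    fun z hz hzP => (hPC z hzP (image_subset_range _ _ ((mem_support_seqWalk hC.adj).1 hz))).symm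
  simpa using hlongest _ _ hcyc

theorem false_of_thetaModel [Finite V] (hC : G.IsCycleEnum n f) (D : G.PathDecomposition 2)
    {i a : ℕ} (ha : 3 ≤ a) (han : a + 3 ≤ n) {s y : V} (Q : G.Walk s y) (hQ : 0 < Q.length)
    (hQC : ∀ z ∈ Q.support, z ∉ range f) (hs : G.Adj (f i) s) (hy : G.Adj y (f (i + a))) :
    False := by
  have hQdisj : ∀ a b : ℕ, Disjoint (f '' Icc a b) {z | z ∈ Q.support} :=
    fun _ _ => Set.disjoint_left.2 fun z hz hzQ => hQC z hzQ (image_subset_range _ _ hz)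
  have hQnil : ¬Q.Nil := Walk.not_nil_iff_lt_length.2 hQ
  refine D.false_of_thetaModel (hC.apply_add_ne i (d := a) (by omega) (by omega)).symm
    ![f '' Icc (i + 1) (i + a - 1), f '' Icc (i + a + 1) (i + n - 1), {z | z ∈ Q.support}]
    (fun k => by
      fin_cases k
      exacts [D.ordConnected_bagsMeeting_image_Icc hC.adj _ _,
        D.ordConnected_bagsMeeting_image_Icc hC.adj _ _, D.ordConnected_bagsMeeting_support Q])
    (pairwise_on_vec₃ (fun _ _ h => h.symm) (hC.disjoint_image_Icc (by omega) (by omega))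
      (hQdisj _ _) (hQdisj _ _))
    (fun k => by
      fin_cases k
      exacts [hC.apply_notMem_image_Icc_of_gt (by omega) (by omega),
        hC.apply_notMem_image_Icc_of_gt (by omega) (by omega),
        fun h => hQC _ h (mem_range_self _)])
    (fun k => by
      fin_cases k
      exacts [hC.apply_notMem_image_Icc_of_lt (by omega) (by omega),
        hC.apply_notMem_image_Icc_of_gt (by omega) (by omega),
        fun h => hQC _ h (mem_range_self _)])
    (fun k => by
      fin_cases k
      exacts [⟨f (i + 1), mem_image_of_mem f ⟨by omega, by omega⟩, hC.adj i⟩,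
        ⟨f (i + n - 1), mem_image_of_mem f ⟨by omega, by omega⟩,
          (hC.adj_add_sub_one (by omega) i).symm⟩,
        ⟨s, Q.start_mem_support, hs⟩])
    (fun k => by
      fin_cases k
      exacts [⟨f (i + a - 1), mem_image_of_mem f ⟨by omega, by omega⟩,
          (hC.adj_sub_one (k := i + a) (by omega)).symm⟩,
        ⟨f (i + a + 1), mem_image_of_mem f ⟨by omega, by omega⟩, hC.adj _⟩,
        ⟨y, Q.end_mem_support, hy.symm⟩])
    (fun k => by
      fin_cases k
      exacts [⟨f (i + 1), mem_image_of_mem f ⟨by omega, by omega⟩, f (i + 1 + 1),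
          mem_image_of_mem f ⟨by omega, by omega⟩, hC.adj _⟩,
        ⟨f (i + a + 1), mem_image_of_mem f ⟨by omega, by omega⟩, f (i + a + 1 + 1),
          mem_image_of_mem f ⟨by omega, by omega⟩, hC.adj _⟩,
        ⟨s, Q.start_mem_support, Q.snd, Q.getVert_mem_support 1, Walk.adj_snd hQnil⟩])

theorem false_of_cliqueModel [Finite V] (hC : G.IsCycleEnum n f) (D : G.PathDecomposition 2)
    {x y : V} (hx : x ∉ range f) {i d e : ℕ} (hd : 0 < d) (hde : d < e) (hen : e < n)
    (hxi : G.Adj x (f i)) (hxe : G.Adj x (f (i + e))) (hxy : G.Adj x y)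
    (R : G.Walk y (f (i + d))) (hRC : ∀ z ∈ R.support, z ∈ range f → z = f (i + d))
    (hxR : x ∉ R.support) : False := by
  have hxC : ∀ a b : ℕ, Disjoint {x} (f '' Icc a b) :=
    fun _ _ => disjoint_singleton_left.2 fun h => hx (image_subset_range _ _ h)
  have hRdisj : ∀ {a b : ℕ}, f (i + d) ∉ f '' Icc a b →
      Disjoint (f '' Icc a b) {z | z ∈ R.support} := fun h =>
    Set.disjoint_left.2 fun z hz hzR => h (hRC z hzR (image_subset_range _ _ hz) ▸ hz)
  refine D.false_of_cliqueModel
    ![{x}, f '' Icc i (i + d - 1), f '' Icc (i + d + 1) (i + n - 1), {z | z ∈ R.support}]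
    (fun k => by
      fin_cases k
      exacts [D.ordConnected_bagsMeeting_singleton x,
        D.ordConnected_bagsMeeting_image_Icc hC.adj _ _,
        D.ordConnected_bagsMeeting_image_Icc hC.adj _ _, D.ordConnected_bagsMeeting_support R])
    (pairwise_on_vec₄ (fun _ _ h => h.symm) (hxC _ _) (hxC _ _)
      (disjoint_singleton_left.2 hxR) (hC.disjoint_image_Icc (by omega) (by omega))
      (hRdisj (hC.apply_notMem_image_Icc_of_lt (by omega) (by omega)))
      (hRdisj (hC.apply_notMem_image_Icc_of_gt (by omega) (by omega))))
    (pairwise_on_vec₄ (r := fun A B => ∃ p ∈ A, ∃ q ∈ B, G.Adj p q)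
      (fun _ _ ⟨p, hp, q, hq, h⟩ => ⟨q, hq, p, hp, h.symm⟩)
      ⟨x, rfl, f i, mem_image_of_mem f ⟨by omega, by omega⟩, hxi⟩
      ⟨x, rfl, f (i + e), mem_image_of_mem f ⟨by omega, by omega⟩, hxe⟩
      ⟨x, rfl, y, R.start_mem_support, hxy⟩
      ⟨f i, mem_image_of_mem f ⟨by omega, by omega⟩, f (i + n - 1),
        mem_image_of_mem f ⟨by omega, by omega⟩, (hC.adj_add_sub_one (by omega) i).symm⟩
      ⟨f (i + d - 1), mem_image_of_mem f ⟨by omega, by omega⟩, f (i + d), R.end_mem_support,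
        hC.adj_sub_one (by omega)⟩
      ⟨f (i + d + 1), mem_image_of_mem f ⟨by omega, by omega⟩, f (i + d), R.end_mem_support,
        (hC.adj _).symm⟩)

theorem length_le_two_of_isPath [Finite V] (hC : G.IsCycleEnum n f) (D : G.PathDecomposition 2)
    (hlongest : ∀ (a : V) (w : G.Walk a a), w.IsCycle → w.length ≤ n) (hn : 0 < n) {u v : V}
    (hu : u ∈ range f) (hv : v ∈ range f) (P : G.Walk u v) (hP : P.IsPath)
    (hPC : ∀ z ∈ P.support, z ∈ range f → z = u ∨ z = v) : P.length ≤ 2 := by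
  by_contra! h3
  obtain ⟨i, hi, rfl⟩ := hC.exists_lt_apply_eq hn hu
  obtain ⟨a, ha, rfl⟩ := hC.exists_offset hi hv
  obtain rfl | ha0 := Nat.eq_zero_or_pos a
  · simp [Walk.isPath_iff_nil.1 hP |>.eq_nil] at h3
  have hround := (hC.apply_add_add_sub i ha.le).symm
  -- Closing `P` up with either arc of the cycle gives a cycle, at most as long as the longest.
  have h₁ := hC.add_length_le hlongest ha P.reverse hP.reverse (by simp; omega)
    (by simpa [or_comm] using hPC)
  have h₂ := hC.add_length_le hlongest (i := i + a) (by omega) (P.copy hround rfl)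
    (by simpa using hP) (by simp; omega) (by simpa [← hround] using hPC)
  obtain ⟨s, y, hs, hy, Q, rfl⟩ := P.exists_eq_cons_concat (by omega)
  simp only [Walk.length_reverse, Walk.length_copy, Walk.length_cons, Walk.length_concat]
    at h₁ h₂ h3
  rw [Walk.cons_isPath_iff, Walk.concat_isPath_iff, Walk.support_concat] at hP
  refine hC.false_of_thetaModel D (by omega) (by omega) Q (by omega) (fun z hz hzC => ?_) hs hy
  rcases hPC z (by simp [hz]) hzC with rfl | rfl
  · exact hP.2 (List.mem_append_left _ hz)
  · exact hP.1.2 hz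

theorem false_of_detour [Finite V] (hC : G.IsCycleEnum n f) (D : G.PathDecomposition 2)
    (hlongest : ∀ (a : V) (w : G.Walk a a), w.IsCycle → w.length ≤ n) (hn : 0 < n)
    {p q x y : V} (hp : p ∈ range f) (hq : q ∈ range f) (hpq : p ≠ q) (hx : x ∉ range f)
    (hpx : G.Adj p x) (hxy : G.Adj x y) (hyq : y ≠ q) (R : G.Walk y q) (hR : R.IsPath)
    (hRC : ∀ z ∈ R.support, z ∈ range f → z = q) (hxR : x ∉ R.support) : False := by
  have hP : (Walk.cons hpx (.cons hxy R)).IsPath := by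
    simp only [Walk.cons_isPath_iff, Walk.support_cons, List.mem_cons, not_or]
    exact ⟨⟨hR, hxR⟩, fun h => hx (h ▸ hp), fun h => hpq (hRC p h hp)⟩
  have hlen := hC.length_le_two_of_isPath D hlongest hn hp hq _ hP (by
    simp only [Walk.support_cons, List.mem_cons]
    rintro z (rfl | rfl | hz) hzC
    · exact Or.inl rfl
    · exact absurd hzC hx
    · exact Or.inr (hRC z hz hzC))
  have hR0 : R.length ≠ 0 := fun h => hyq (Walk.eq_of_length_eq_zero h)
  simp only [Walk.length_cons] at hlen
  omega

theorem eq_or_eq_of_adj [Finite V] (hC : G.IsCycleEnum n f) (D : G.PathDecomposition 2)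
    (hlongest : ∀ (a : V) (w : G.Walk a a), w.IsCycle → w.length ≤ n) (hn : 0 < n)
    {x u v y : V} (hx : x ∉ range f) (hconn : (G.induce {z | z ≠ x}).Preconnected)
    (hu : u ∈ range f) (hv : v ∈ range f) (huv : u ≠ v) (hxu : G.Adj x u) (hxv : G.Adj x v)
    (hxy : G.Adj x y) : y = u ∨ y = v := by
  classical
  by_contra! hy
  -- Leave `x` through `y` and go on, avoiding `x`, until the cycle is first met, at `z`.
  obtain ⟨W, hW⟩ := hconn.exists_walk_of_induce hxy.ne' hxu.ne'
  obtain ⟨z, hz, R, hRC, hRW⟩ := W.exists_prefix_first_mem hu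
  have hRC' : ∀ w ∈ R.bypass.support, w ∈ range f → w = z := fun w h =>
    hRC w (R.support_bypass_subset_support h)
  have hxR : x ∉ R.bypass.support := fun h =>
    hW x (hRW (R.support_bypass_subset_support h)) rfl
  by_cases hzu : z = u
  · subst hzu
    exact hC.false_of_detour D hlongest hn hv hz huv.symm hx hxv.symm hxy hy.1 _
      R.bypass_isPath hRC' hxR
  by_cases hzv : z = v
  · subst hzv
    exact hC.false_of_detour D hlongest hn hu hz huv hx hxu.symm hxy hy.2 _
      R.bypass_isPath hRC' hxR
  obtain ⟨i, hi, rfl⟩ := hC.exists_lt_apply_eq hn hu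
  obtain ⟨a, ha, rfl⟩ := hC.exists_offset hi hv
  obtain ⟨d, hd, rfl⟩ := hC.exists_offset hi hz
  have ha0 : a ≠ 0 := by rintro rfl; simp at huv
  have hd0 : d ≠ 0 := by rintro rfl; simp at hzu
  rcases lt_or_gt_of_ne (show d ≠ a by rintro rfl; exact hzv rfl) with hda | hda
  · exact hC.false_of_cliqueModel D hx (by omega) hda ha hxu hxv hxy R.bypass hRC' hxR
  · have hshift : f (i + d) = f (i + a + (d - a)) := congrArg f (by omega)
    exact hC.false_of_cliqueModel D hx (i := i + a) (d := d - a) (e := n - a) (by omega)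
      (by omega) (by omega) hxv ((hC.apply_add_add_sub i ha.le).symm ▸ hxu) hxy
      (R.bypass.copy rfl hshift) (by simpa [← hshift] using hRC') (by simpa using hxR)

end IsCycleEnum

end SimpleGraph

open SimpleGraph

/-- Let `G` be a finite 2-connected graph of pathwidth at most `2` and
let `C` be a longest cycle of `G` (given by the injective cyclic enumeration `c`, with
every cycle of `G` having length at most `n`). Then every `C`-path of `G` has at most one
internal vertex (i.e. length at most `2`), and any internal vertex of a `C`-path has
degree `2` in `G`. -/
theorem cPath_short_and_internal_degree_two {V : Type*} [Fintype V] (G : SimpleGraph V)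
    (h2conn : TwoConnected G) (hpw : PathwidthLE G 2)
    (n : ℕ) (hn : 3 ≤ n) (c : Fin n → V) (hinj : Function.Injective c)
    (hcyc : ∀ r s : Fin n, ((r : ℕ) + 1) % n = (s : ℕ) → G.Adj (c r) (c s))
    (hlongest : ∀ (a : V) (w : G.Walk a a), w.IsCycle → w.length ≤ n) :
    ∀ (u v : V) (P : G.Walk u v), P.IsPath → 0 < P.length →
      {w | w ∈ P.support} ∩ Set.range c = {u, v} →
      P.length ≤ 2 ∧
      (∀ w ∈ P.support, w ∉ Set.range c → (G.neighborSet w).ncard = 2) := by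
  have : NeZero n := ⟨by omega⟩
  obtain ⟨m, B, h₁, h₂, h₃, h₄⟩ := hpw
  let D : G.PathDecomposition 2 := ⟨m, B, h₁, h₂, h₃, h₄⟩
  obtain ⟨f, hC, hfc⟩ := exists_isCycleEnum hinj hcyc
  rw [← hfc]
  intro u v P hP hlen hPC
  have hPC' : ∀ z ∈ P.support, z ∈ range f → z = u ∨ z = v := fun z hz hzC => by
    simpa using hPC.subset ⟨hz, hzC⟩
  have hu : u ∈ range f := (hPC.symm.subset (mem_insert u {v})).2
  have hv : v ∈ range f := (hPC.symm.subset (mem_insert_of_mem u rfl)).2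
  have huv : u ≠ v := by
    rintro rfl
    simp [Walk.isPath_iff_nil.1 hP |>.eq_nil] at hlen
  have hlen2 := hC.length_le_two_of_isPath D hlongest (by omega) hu hv P hP hPC'
  refine ⟨hlen2, fun x hx hxC => ?_⟩
  obtain ⟨hux, hxv⟩ := P.adj_of_mem_support_of_length_le_two hlen2 hx
    (fun h => hxC (h ▸ hu)) (fun h => hxC (h ▸ hv))
  have hnbr : G.neighborSet x = {u, v} := Set.ext fun y =>
    ⟨hC.eq_or_eq_of_adj D hlongest (by omega) hxC (h2conn.2.2 x).preconnected hu hv huv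
      hux.symm hxv, by rintro (rfl | rfl); exacts [hux.symm, hxv]⟩
  rw [hnbr, ncard_pair huv]
end
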